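/- arXiv:1609.09441 — 2 statements merged into one kernel-verified Lean document; each statement's English description precedes it below -/
import Mathlib

section
/- Let a > 2 and let {y_k, w_k} be the sequences generated by the GFDPG method with the choice t_k = (k + a)/a for all k ≥ 0 (this choice satisfies t_k² ≤ T_k). Then for any k ≥ 1 and any L′ > 0 satisfying the descent condition at y_k, min{ min_{1≤i≤k} ‖y_i − w_{i−1}‖, ‖p_{L′}(y_k) − y_k‖ } ≤ (a·√6/√(a − 2))·‖y_0 − y_*‖ / k^{1.5}. -/
/-!
With `Z_k = T_k w_k - (T_k - t_k) y_k - t_k y_*`, the energy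
`‖Z_k‖² / t_k² + 2 (T_k - t_k) / L_k · (q̃ y_k - q̃ y_*)` drops by at least
`(T_k - t_k²) ‖y_{k+1} - w_k‖²` in each step. The extrapolation rule for `w_{k+1}` makes
`(t_k / t_{k+1}) Z_{k+1}` the combination `(t_k² / T_k) E_k + (1 - t_k² / T_k) Z_k`, where
`E_k = T_k y_{k+1} - (T_k - t_k) y_k - t_k y_*`, and the proximal-gradient inequality
`L (‖p_L(w) - x‖² - ‖w - x‖²) ≤ 2 (q̃ x - q̃ (p_L(w)))` at `x = y_k` and `x = y_*`, weighted by
`T_k - t_k` and `t_k`, bounds `‖E_k‖²` by `‖Z_k‖²` plus the decrease of the function gaps.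
Summing, `Σ_{m<k} (T_m - t_m²) ‖y_{m+1} - w_m‖² ≤ ‖y_0 - y_*‖²`, and for `t_m = (m + a)/a` the
weights `T_m - t_m²` add up to at least `(a - 2) k³ / (6 a²)` once `k ≥ 2`; for `k = 1` it is
enough that `‖y_1 - y_*‖ ≤ ‖y_0 - y_*‖`.
-/

open scoped RealInnerProductSpace

open Set Filter Topology

section ProxGrad

variable {V : Type*} [NormedAddCommGroup V] [InnerProductSpace ℝ V]

theorem ConvexOn.add_inner_sub_le_of_hasGradientAt [CompleteSpace V] {f : V → ℝ} {s : Set V}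
    {f' x y : V} (hf : ConvexOn ℝ s f) (hx : x ∈ s) (hy : y ∈ s) (h : HasGradientAt f f' x) :
    f x + ⟪y - x, f'⟫ ≤ f y := by
  have hline : ConvexOn ℝ (AffineMap.lineMap x y ⁻¹' s) (f ∘ AffineMap.lineMap x y) :=
    hf.comp_affineMap _
  have hderiv : HasDerivAt (f ∘ AffineMap.lineMap x y) ⟪f', y - x⟫ (0 : ℝ) := by
    simpa using h.hasFDerivAt.comp_hasDerivAt_of_eq (0 : ℝ) AffineMap.hasDerivAt_lineMap (by simp)
  have := hline.le_slope_of_hasDerivAt (by simpa using hx) (by simpa using hy) zero_lt_one hderiv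
  simp only [slope_def_field, Function.comp_apply, AffineMap.lineMap_apply_zero,
    AffineMap.lineMap_apply_one, sub_zero, div_one] at this
  rw [real_inner_comm]
  linarith

theorem norm_smul_add_smul_sq (α β : ℝ) (u v : V) :
    ‖α • u + β • v‖ ^ 2 = (α + β) * (α * ‖u‖ ^ 2 + β * ‖v‖ ^ 2) - α * β * ‖u - v‖ ^ 2 := by
  simp only [← real_inner_self_eq_norm_sq, inner_add_left, inner_add_right, inner_sub_left,
    inner_sub_right, real_inner_smul_left, real_inner_smul_right, real_inner_comm u v]
  ring

/-- The quadratic model `Q_L(·, w)` of `F + G` around `w`. -/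
noncomputable def proxGradModel (F G : V → ℝ) (F' : V → V) (L : ℝ) (w y : V) : ℝ :=
  F w + ⟪y - w, F' w⟫ + L / 2 * ‖y - w‖ ^ 2 + G y

theorem IsMinOn.inner_proxGradModel_le {F G : V → ℝ} {F' : V → V} {L : ℝ} {w p : V}
    (hG : ConvexOn ℝ univ G) (hp : IsMinOn (proxGradModel F G F' L w) univ p) (x : V) :
    ⟪p - x, F' w + L • (p - w)⟫ ≤ G x - G p := by
  set K := ⟪x - p, F' w + L • (p - w)⟫ + G x - G p
  set C := L / 2 * ‖x - p‖ ^ 2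
  have hsmall : ∀ s ∈ Ioc (0 : ℝ) 1, 0 ≤ K + s * C := by
    rintro s ⟨hs0, hs1⟩
    have hmin : proxGradModel F G F' L w p ≤ proxGradModel F G F' L w (p + s • (x - p)) :=
      hp (mem_univ _)
    have hGs : G (p + s • (x - p)) ≤ (1 - s) * G p + s * G x := by
      have := hG.2 (mem_univ p) (mem_univ x) (by linarith : (0 : ℝ) ≤ 1 - s) hs0.le (by ring)
      rwa [show (1 - s) • p + s • x = p + s • (x - p) by module] at this
    have hexp : proxGradModel F G F' L w (p + s • (x - p)) - G (p + s • (x - p))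
        = proxGradModel F G F' L w p - G p + s * ⟪x - p, F' w + L • (p - w)⟫ + s ^ 2 * C := by
      simp only [C, proxGradModel, ← real_inner_self_eq_norm_sq, inner_add_left, inner_add_right,
        inner_sub_left, inner_sub_right, real_inner_smul_left, real_inner_smul_right,
        real_inner_comm x p, real_inner_comm x w, real_inner_comm p w]
      ring
    refine (mul_nonneg_iff_of_pos_left hs0).1 ?_
    nlinarith
  have hlim : Tendsto (fun s : ℝ => K + s * C) (𝓝[>] 0) (𝓝 K) := by
    have : Tendsto (fun s : ℝ => K + s * C) (𝓝 0) (𝓝 (K + 0 * C)) :=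
      (continuous_const.add (continuous_id.mul continuous_const)).tendsto 0
    simpa using this.mono_left nhdsWithin_le_nhds
  have hK : 0 ≤ K := ge_of_tendsto hlim <| by
    filter_upwards [Ioc_mem_nhdsGT zero_lt_one] with s hs using hsmall s hs
  rw [← neg_sub x p, inner_neg_left]
  linarith

theorem IsMinOn.mul_norm_sub_sq_sub_le_of_descent [CompleteSpace V] {F G : V → ℝ} {F' : V → V}
    {L : ℝ} {w p : V} (hF : ConvexOn ℝ univ F) (hF' : HasGradientAt F (F' w) w)
    (hG : ConvexOn ℝ univ G) (hp : IsMinOn (proxGradModel F G F' L w) univ p)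
    (hdesc : F p + G p ≤ proxGradModel F G F' L w p) (x : V) :
    L * (‖p - x‖ ^ 2 - ‖w - x‖ ^ 2) ≤ 2 * (F x + G x - (F p + G p)) := by
  have hFx := hF.add_inner_sub_le_of_hasGradientAt (mem_univ w) (mem_univ x) hF'
  have hopt := hp.inner_proxGradModel_le hG x
  have hnorm : ‖p - x‖ ^ 2 - ‖w - x‖ ^ 2 = 2 * ⟪p - x, p - w⟫ - ‖p - w‖ ^ 2 := by
    rw [show w - x = (p - x) - (p - w) by abel, norm_sub_sq_real (p - x) (p - w)]; ring
  have hsplit : ⟪p - x, F' w⟫ = ⟪p - w, F' w⟫ - ⟪x - w, F' w⟫ := by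
    rw [← inner_sub_left, sub_sub_sub_cancel_right]
  rw [inner_add_right, real_inner_smul_right] at hopt
  rw [hnorm]
  unfold proxGradModel at hdesc
  linarith

theorem mul_norm_weighted_sub_sq_le {q : V → ℝ} {L A B : ℝ} {x y w y' : V} (hA : 0 ≤ A)
    (hB : 0 ≤ B) (hprox : ∀ z, L * (‖y' - z‖ ^ 2 - ‖w - z‖ ^ 2) ≤ 2 * (q z - q y')) :
    L * ‖(A + B) • y' - A • y - B • x‖ ^ 2 ≤ L * ‖(A + B) • w - A • y - B • x‖ ^ 2
      + 2 * (A + B) * (A * (q y - q y') + B * (q x - q y')) := by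
  have hsplit : ∀ u : V, ‖(A + B) • u - A • y - B • x‖ ^ 2
      = (A + B) * (A * ‖u - y‖ ^ 2 + B * ‖u - x‖ ^ 2) - A * B * ‖x - y‖ ^ 2 := fun u => by
    rw [show (A + B) • u - A • y - B • x = A • (u - y) + B • (u - x) by module,
      norm_smul_add_smul_sq, show (u - y) - (u - x) = x - y by abel]
  have h := mul_le_mul_of_nonneg_left
    (add_le_add (mul_le_mul_of_nonneg_left (hprox y) hA) (mul_le_mul_of_nonneg_left (hprox x) hB))
    (add_nonneg hA hB)
  rw [hsplit, hsplit]
  linarith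

noncomputable def gfdpgEnergy (q : V → ℝ) (x : V) (L t T : ℝ) (y w : V) : ℝ :=
  ‖T • w - (T - t) • y - t • x‖ ^ 2 / t ^ 2 + 2 * (T - t) / L * (q y - q x)

theorem norm_sq_extrapolate_eq {t t' T : ℝ} {x y w y' w' : V} (ht : 0 < t) (ht' : 0 < t')
    (hT : 0 < T) (hw' : w' = y' + ((T - t) * t' / (t * (T + t'))) • (y' - y)
      + ((t ^ 2 - T) * t' / (t * (T + t'))) • (y' - w)) :
    ‖(T + t') • w' - T • y' - t' • x‖ ^ 2 / t' ^ 2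
      = ‖T • y' - (T - t) • y - t • x‖ ^ 2 / T
        + (1 / t ^ 2 - 1 / T) * ‖T • w - (T - t) • y - t • x‖ ^ 2 - (T - t ^ 2) * ‖y' - w‖ ^ 2 := by
  set E := T • y' - (T - t) • y - t • x
  set Z := T • w - (T - t) • y - t • x
  have hcomb : (t / t') • ((T + t') • w' - T • y' - t' • x)
      = (t ^ 2 / T) • E + (1 - t ^ 2 / T) • Z := by
    simp only [E, Z, hw']
    match_scalars <;> field_simp <;> ring
  have hEZ : E - Z = T • (y' - w) := by simp only [E, Z]; module
  have h := congrArg (‖·‖ ^ 2) hcomb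
  simp only [norm_smul_add_smul_sq, hEZ, norm_smul, mul_pow, Real.norm_eq_abs, sq_abs,
    div_pow] at h
  field_simp
  field_simp at h
  refine mul_left_cancel₀ hT.ne' ?_
  linear_combination h

theorem gfdpgEnergy_step_le {q : V → ℝ} {L t t' T : ℝ} {x y w y' w' : V} (hL : 0 < L)
    (ht : 0 < t) (ht' : 0 < t') (htT : t ≤ T)
    (hprox : ∀ z, L * (‖y' - z‖ ^ 2 - ‖w - z‖ ^ 2) ≤ 2 * (q z - q y'))
    (hw' : w' = y' + ((T - t) * t' / (t * (T + t'))) • (y' - y)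
      + ((t ^ 2 - T) * t' / (t * (T + t'))) • (y' - w)) :
    gfdpgEnergy q x L t' (T + t') y' w' + (T - t ^ 2) * ‖y' - w‖ ^ 2
      ≤ gfdpgEnergy q x L t T y w := by
  have hT : 0 < T := ht.trans_le htT
  simp only [gfdpgEnergy, add_sub_cancel_right, norm_sq_extrapolate_eq ht ht' hT hw']
  set E := T • y' - (T - t) • y - t • x
  set Z := T • w - (T - t) • y - t • x
  have hEZ : L * ‖E‖ ^ 2 ≤ L * ‖Z‖ ^ 2 + 2 * T * ((T - t) * (q y - q y') + t * (q x - q y')) := by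
    simpa only [sub_add_cancel] using mul_norm_weighted_sub_sq_le (sub_nonneg.2 htT) ht.le hprox
  have hE : ‖E‖ ^ 2 / T ≤ ‖Z‖ ^ 2 / T + 2 / L * ((T - t) * (q y - q y') + t * (q x - q y')) :=
    calc ‖E‖ ^ 2 / T = L * ‖E‖ ^ 2 / (L * T) := by field_simp
      _ ≤ (L * ‖Z‖ ^ 2 + 2 * T * ((T - t) * (q y - q y') + t * (q x - q y'))) / (L * T) := by
        gcongr
      _ = _ := by field_simp
  have hq : 2 * T / L * (q y' - q x) + 2 / L * ((T - t) * (q y - q y') + t * (q x - q y'))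
      = 2 * (T - t) / L * (q y - q x) := by ring
  have hZ : ‖Z‖ ^ 2 / T + (1 / t ^ 2 - 1 / T) * ‖Z‖ ^ 2 = ‖Z‖ ^ 2 / t ^ 2 := by ring
  linarith

theorem gfdpgEnergy_anti_of_le {q : V → ℝ} {L L' t T : ℝ} {x y w : V} (hL : 0 < L) (hLL' : L ≤ L')
    (htT : t ≤ T) (hq : q x ≤ q y) :
    gfdpgEnergy q x L' t T y w ≤ gfdpgEnergy q x L t T y w := by
  unfold gfdpgEnergy
  have : 0 ≤ 2 * (T - t) := by linarith
  gcongr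

theorem gfdpgEnergy_nonneg {q : V → ℝ} {L t T : ℝ} {x y w : V} (hL : 0 < L) (htT : t ≤ T)
    (hq : q x ≤ q y) : 0 ≤ gfdpgEnergy q x L t T y w := by
  unfold gfdpgEnergy
  have : 0 ≤ 2 * (T - t) := by linarith
  have : 0 ≤ q y - q x := by linarith
  positivity

end ProxGrad

section StepSizes

open Finset

theorem sum_range_succ_add_div {a : ℝ} (ha : a ≠ 0) (m : ℕ) :
    ∑ i ∈ range (m + 1), ((i : ℝ) + a) / a = (m + 1) * (m + 2 * a) / (2 * a) := by
  induction m with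
  | zero => simp; field_simp
  | succ m ih => rw [sum_range_succ, ih]; push_cast; field_simp; ring

theorem sum_range_succ_add_div_sub_sq {a : ℝ} (ha : a ≠ 0) (m : ℕ) :
    ∑ i ∈ range (m + 1), ((i : ℝ) + a) / a - ((m + a) / a) ^ 2
      = m * ((a - 2) * m + (2 * a ^ 2 - 3 * a)) / (2 * a ^ 2) := by
  rw [sum_range_succ_add_div ha]; field_simp; ring

theorem cube_div_le_sum_range {a : ℝ} (ha : 2 < a) {n : ℕ} (hn : 2 ≤ n) :
    (a - 2) * n ^ 3 / (6 * a ^ 2)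
      ≤ ∑ m ∈ range n, (m : ℝ) * ((a - 2) * m + (2 * a ^ 2 - 3 * a)) / (2 * a ^ 2) := by
  have ha0 : 0 < a := by linarith
  induction n, hn using Nat.le_induction with
  | base =>
    simp only [sum_range_succ, sum_range_zero]
    rw [div_le_iff₀ (by positivity)]
    push_cast
    field_simp
    nlinarith [sq_nonneg (6 * a - 7)]
  | succ n hn ih =>
    have hn' : (2 : ℝ) ≤ n := by exact_mod_cast hn
    have hcore :
        (a - 2) * ((n + 1) ^ 3 - n ^ 3) ≤ 3 * (n * ((a - 2) * n + (2 * a ^ 2 - 3 * a))) := by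
      nlinarith [mul_nonneg (sub_nonneg.2 hn') (sq_nonneg (a - 1))]
    have hstep : (a - 2) * ((n : ℝ) + 1) ^ 3 / (6 * a ^ 2)
        ≤ (a - 2) * n ^ 3 / (6 * a ^ 2)
          + n * ((a - 2) * n + (2 * a ^ 2 - 3 * a)) / (2 * a ^ 2) := by
      rw [show (2 * a ^ 2) = 6 * a ^ 2 / 3 by ring, div_div_eq_mul_div, ← add_div,
        div_le_div_iff_of_pos_right (by positivity)]
      linarith
    push_cast
    rw [sum_range_succ]
    linarith

theorem le_mul_div_rpow_of_mul_sq_le {a d r : ℝ} {k : ℕ} (ha : 2 < a) (hk : 1 ≤ k) (hd : 0 ≤ d)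
    (h : (a - 2) * k ^ 3 * r ^ 2 ≤ 6 * a ^ 2 * d ^ 2) :
    r ≤ a * Real.sqrt 6 / Real.sqrt (a - 2) * d / (k : ℝ) ^ (1.5 : ℝ) := by
  have ha2 : 0 < a - 2 := by linarith
  have hk0 : (0 : ℝ) < k := by exact_mod_cast hk
  have hsq : (a * Real.sqrt 6 / Real.sqrt (a - 2) * d / (k : ℝ) ^ (1.5 : ℝ)) ^ 2
      = 6 * a ^ 2 * d ^ 2 / ((a - 2) * k ^ 3) := by
    have hk3 : ((k : ℝ) ^ (1.5 : ℝ)) ^ 2 = k ^ 3 := by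
      rw [← Real.rpow_natCast, ← Real.rpow_mul hk0.le]; norm_num
    rw [div_pow, mul_pow, div_pow, mul_pow, hk3, Real.sq_sqrt (by norm_num), Real.sq_sqrt ha2.le]
    field_simp
  refine le_of_pow_le_pow_left₀ two_ne_zero (by positivity) ?_
  rw [hsq, le_div_iff₀ (by positivity)]
  linarith

end StepSizes

section GFDPG

variable {V : Type*} [NormedAddCommGroup V] [InnerProductSpace ℝ V]

/-- A run of the GFDPG method, with `y (k + 1) = p_{L (k + 1)} (w k)` recorded through its
minimality and the descent condition. -/
structure IsGFDPG (F G : V → ℝ) (F' : V → V) (y w : ℕ → V) (t T L : ℕ → ℝ) : Prop where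
  w_zero : w 0 = y 0
  L_pos : ∀ k, 0 < L k
  L_mono : ∀ k, L k ≤ L (k + 1)
  t_pos : ∀ k, 0 < t k
  T_eq_sum : ∀ k, T k = ∑ i ∈ Finset.range (k + 1), t i
  isMinOn_succ : ∀ k, IsMinOn (proxGradModel F G F' (L (k + 1)) (w k)) univ (y (k + 1))
  descent_succ : ∀ k,
    F (y (k + 1)) + G (y (k + 1)) ≤ proxGradModel F G F' (L (k + 1)) (w k) (y (k + 1))
  w_succ : ∀ k, w (k + 1) = y (k + 1)
    + ((T k - t k) * t (k + 1) / (t k * T (k + 1))) • (y (k + 1) - y k)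
    + ((t k ^ 2 - T k) * t (k + 1) / (t k * T (k + 1))) • (y (k + 1) - w k)

namespace IsGFDPG

variable {F G : V → ℝ} {F' : V → V} {y w : ℕ → V} {t T L : ℕ → ℝ}

theorem T_zero (h : IsGFDPG F G F' y w t T L) : T 0 = t 0 := by
  simp [h.T_eq_sum]

theorem T_succ (h : IsGFDPG F G F' y w t T L) (k : ℕ) : T (k + 1) = T k + t (k + 1) := by
  rw [h.T_eq_sum, h.T_eq_sum, Finset.sum_range_succ]

theorem t_le_T (h : IsGFDPG F G F' y w t T L) (k : ℕ) : t k ≤ T k := by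
  rw [h.T_eq_sum, Finset.sum_range_succ, le_add_iff_nonneg_left]
  exact Finset.sum_nonneg fun i _ => (h.t_pos i).le

theorem mul_norm_sub_sq_sub_le [CompleteSpace V] (h : IsGFDPG F G F' y w t T L)
    (hF : ConvexOn ℝ univ F) (hF' : ∀ v, HasGradientAt F (F' v) v) (hG : ConvexOn ℝ univ G)
    (k : ℕ) (z : V) :
    L (k + 1) * (‖y (k + 1) - z‖ ^ 2 - ‖w k - z‖ ^ 2)
      ≤ 2 * (F z + G z - (F (y (k + 1)) + G (y (k + 1)))) :=
  (h.isMinOn_succ k).mul_norm_sub_sq_sub_le_of_descent hF (hF' _) hG (h.descent_succ k) z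

theorem energy_add_sum_le [CompleteSpace V] (h : IsGFDPG F G F' y w t T L)
    (hF : ConvexOn ℝ univ F) (hF' : ∀ v, HasGradientAt F (F' v) v) (hG : ConvexOn ℝ univ G)
    {x : V} (hx : ∀ z, F x + G x ≤ F z + G z) (n : ℕ) :
    gfdpgEnergy (F + G) x (L n) (t n) (T n) (y n) (w n)
      + ∑ m ∈ Finset.range n, (T m - t m ^ 2) * ‖y (m + 1) - w m‖ ^ 2 ≤ ‖y 0 - x‖ ^ 2 := by
  induction n with
  | zero =>
    have ht0 := (h.t_pos 0).ne'
    simp only [gfdpgEnergy, h.T_zero, h.w_zero, sub_self, zero_smul, sub_zero, ← smul_sub,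
      norm_smul, mul_pow, Real.norm_eq_abs, sq_abs, mul_zero, zero_mul, zero_div, add_zero,
      Finset.sum_range_zero]
    rw [mul_div_cancel_left₀ _ (pow_ne_zero 2 ht0)]
  | succ n ih =>
    have hstep := gfdpgEnergy_step_le (q := F + G) (x := x) (h.L_pos (n + 1)) (h.t_pos n)
      (h.t_pos (n + 1)) (h.t_le_T n) (h.mul_norm_sub_sq_sub_le hF hF' hG n)
      (h.T_succ n ▸ h.w_succ n)
    have hL := gfdpgEnergy_anti_of_le (q := F + G) (y := y n) (w := w n) (h.L_pos n)
      (h.L_mono n) (h.t_le_T n) (hx (y n))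
    rw [Finset.sum_range_succ, h.T_succ n]
    linarith

theorem sq_mul_sum_le [CompleteSpace V] (h : IsGFDPG F G F' y w t T L)
    (hF : ConvexOn ℝ univ F) (hF' : ∀ v, HasGradientAt F (F' v) v) (hG : ConvexOn ℝ univ G)
    {x : V} (hx : ∀ z, F x + G x ≤ F z + G z) (hsq : ∀ m, t m ^ 2 ≤ T m) {n : ℕ} {r : ℝ}
    (hr : 0 ≤ r) (hrn : ∀ m < n, r ≤ ‖y (m + 1) - w m‖) :
    r ^ 2 * ∑ m ∈ Finset.range n, (T m - t m ^ 2) ≤ ‖y 0 - x‖ ^ 2 := by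
  have henergy := gfdpgEnergy_nonneg (q := F + G) (y := y n) (w := w n) (h.L_pos n)
    (h.t_le_T n) (hx (y n))
  refine le_trans ?_ ((le_add_of_nonneg_left henergy).trans (h.energy_add_sum_le hF hF' hG hx n))
  rw [Finset.mul_sum]
  refine Finset.sum_le_sum fun m hm => ?_
  rw [mul_comm]
  gcongr
  · exact sub_nonneg.2 (hsq m)
  · exact hrn m (Finset.mem_range.1 hm)

theorem norm_y_one_sub_w_zero_le [CompleteSpace V] (h : IsGFDPG F G F' y w t T L)
    (hF : ConvexOn ℝ univ F) (hF' : ∀ v, HasGradientAt F (F' v) v) (hG : ConvexOn ℝ univ G)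
    {x : V} (hx : ∀ z, F x + G x ≤ F z + G z) :
    ‖y 1 - w 0‖ ≤ 2 * ‖y 0 - x‖ := by
  have hprox := h.mul_norm_sub_sq_sub_le hF hF' hG 0 x
  rw [h.w_zero] at hprox ⊢
  have hsq : ‖y 1 - x‖ ^ 2 ≤ ‖y 0 - x‖ ^ 2 := by
    nlinarith [hx (y 1), h.L_pos 1]
  calc ‖y 1 - y 0‖ = ‖(y 1 - x) - (y 0 - x)‖ := by rw [sub_sub_sub_cancel_right]
    _ ≤ ‖y 1 - x‖ + ‖y 0 - x‖ := norm_sub_le _ _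
    _ ≤ 2 * ‖y 0 - x‖ := by
      linarith [pow_le_pow_iff_left₀ (norm_nonneg (y 1 - x)) (norm_nonneg (y 0 - x))
        two_ne_zero |>.1 hsq]

theorem mul_sq_le_of_eq_add_div [CompleteSpace V] (h : IsGFDPG F G F' y w t T L)
    (hF : ConvexOn ℝ univ F) (hF' : ∀ v, HasGradientAt F (F' v) v) (hG : ConvexOn ℝ univ G)
    {x : V} (hx : ∀ z, F x + G x ≤ F z + G z) {a : ℝ} (ha : 2 < a)
    (ht : ∀ m, t m = ((m : ℝ) + a) / a) {k : ℕ} (hk : 1 ≤ k) {r : ℝ} (hr : 0 ≤ r)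
    (hrk : ∀ m < k, r ≤ ‖y (m + 1) - w m‖) :
    (a - 2) * k ^ 3 * r ^ 2 ≤ 6 * a ^ 2 * ‖y 0 - x‖ ^ 2 := by
  have ha0 : 0 < a := by linarith
  rcases hk.eq_or_lt with rfl | hk2
  · have hr1 := (hrk 0 one_pos).trans (h.norm_y_one_sub_w_zero_le hF hF' hG hx)
    have ha4 : 4 * (a - 2) ≤ 6 * a ^ 2 := by nlinarith
    calc (a - 2) * ((1 : ℕ) : ℝ) ^ 3 * r ^ 2 ≤ (a - 2) * (2 * ‖y 0 - x‖) ^ 2 := by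
          push_cast; rw [one_pow, mul_one]; gcongr
      _ ≤ 6 * a ^ 2 * ‖y 0 - x‖ ^ 2 := by
          nlinarith [mul_le_mul_of_nonneg_right ha4 (sq_nonneg ‖y 0 - x‖)]
  · have hgap : ∀ m : ℕ,
        T m - t m ^ 2 = (m : ℝ) * ((a - 2) * m + (2 * a ^ 2 - 3 * a)) / (2 * a ^ 2) := fun m => by
      simp only [h.T_eq_sum, ht]
      exact sum_range_succ_add_div_sub_sq ha0.ne' m
    have hsq : ∀ m, t m ^ 2 ≤ T m := fun m => by
      rw [← sub_nonneg, hgap]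
      have : 0 ≤ (a - 2) * m + (2 * a ^ 2 - 3 * a) := by nlinarith
      positivity
    have hsum := h.sq_mul_sum_le hF hF' hG hx hsq hr hrk
    have hcube := cube_div_le_sum_range ha hk2
    simp only [← hgap] at hcube
    have := mul_le_mul_of_nonneg_left hcube (sq_nonneg r)
    rw [mul_div_assoc', div_le_iff₀ (by positivity)] at this
    nlinarith

end IsGFDPG

end GFDPG

theorem gfdpg_prox_grad_norm_rate_general
    {V : Type*} [NormedAddCommGroup V] [InnerProductSpace ℝ V] [FiniteDimensional ℝ V]
    (F G : V → ℝ)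
    (hF : ConvexOn ℝ Set.univ F) (hG : ConvexOn ℝ Set.univ G)
    (F' : V → V) (hF' : ∀ y, HasGradientAt F (F' y) y)
    -- q̃ := F + G attains its minimum at y_*
    (ystar : V) (hystar : ∀ y, F ystar + G ystar ≤ F y + G y)
    -- p_L(w) : the unique minimizer over y of Q_L(y, w)
    (P : ℝ → V → V)
    (hP : ∀ L, 0 < L → ∀ w, IsMinOn
      (fun y => F w + ⟪y - w, F' w⟫ + L / 2 * ‖y - w‖^2 + G y) Set.univ (P L w))
    -- the GFDPG method
    (y w : ℕ → V) (t T Lk : ℕ → ℝ)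
    (hw0 : w 0 = y 0) (hL0 : 0 < Lk 0)
    (hT : ∀ k : ℕ, T k = ∑ i ∈ Finset.range (k+1), t i)
    (hLmono : ∀ k : ℕ, Lk k ≤ Lk (k+1))
    (hdesc : ∀ k : ℕ,
      F (P (Lk (k+1)) (w k)) + G (P (Lk (k+1)) (w k)) ≤
        F (w k) + ⟪P (Lk (k+1)) (w k) - w k, F' (w k)⟫
          + Lk (k+1) / 2 * ‖P (Lk (k+1)) (w k) - w k‖^2 + G (P (Lk (k+1)) (w k)))
    (hy : ∀ k : ℕ, y (k+1) = P (Lk (k+1)) (w k))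
    (hw : ∀ k : ℕ, w (k+1) = y (k+1)
      + (((T k - t k) * t (k+1)) / (t k * T (k+1))) • (y (k+1) - y k)
      + (((t k ^ 2 - T k) * t (k+1)) / (t k * T (k+1))) • (y (k+1) - w k))
    -- the choice t_k = (k + a)/a with a > 2
    (a : ℝ) (ha : 2 < a)
    (htchoice : ∀ k : ℕ, t k = ((k : ℝ) + a) / a)
    (k : ℕ) (hk : 1 ≤ k)
    (L' : ℝ) :
    min ((Finset.Icc 1 k).inf' (Finset.nonempty_Icc.mpr hk) (fun i => ‖y i - w (i-1)‖))
        ‖P L' (y k) - y k‖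
      ≤ (a * Real.sqrt 6 / Real.sqrt (a - 2)) * ‖y 0 - ystar‖ / (k : ℝ) ^ (1.5 : ℝ) := by
  have hLpos : ∀ m, 0 < Lk m := fun m => hL0.trans_le (monotone_nat_of_le_succ hLmono m.zero_le)
  have hrun : IsGFDPG F G F' y w t T Lk :=
    { w_zero := hw0, L_pos := hLpos, L_mono := hLmono, T_eq_sum := hT, w_succ := hw
      t_pos := fun m => by rw [htchoice]; have : 0 < a := (by linarith); positivity
      isMinOn_succ := fun m => hy m ▸ hP _ (hLpos (m + 1)) (w m)
      descent_succ := fun m => hy m ▸ hdesc m }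
  set r := min ((Finset.Icc 1 k).inf' (Finset.nonempty_Icc.mpr hk) (fun i => ‖y i - w (i-1)‖))
    ‖P L' (y k) - y k‖
  have hr0 : 0 ≤ r := le_min (Finset.le_inf' _ _ fun i _ => norm_nonneg _) (norm_nonneg _)
  have hrk : ∀ m < k, r ≤ ‖y (m + 1) - w m‖ := fun m hm =>
    (min_le_left _ _).trans <| Finset.inf'_le (fun i => ‖y i - w (i-1)‖)
      (show m + 1 ∈ Finset.Icc 1 k from Finset.mem_Icc.2 ⟨by omega, by omega⟩)
  exact le_mul_div_rpow_of_mul_sq_le ha hk (norm_nonneg _)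
    (hrun.mul_sq_le_of_eq_add_div hF hF' hG hystar ha htchoice hk hr0 hrk)

/-- Let `a > 2` and let the GFDPG method be run with the choice
`t_k = (k + a)/a` for all `k ≥ 0`. Then for any `k ≥ 1` and any `L′ > 0` satisfying the descent
condition at `y_k`,
`min{ min_{1≤i≤k} ‖y_i − w_{i−1}‖, ‖p_{L′}(y_k) − y_k‖ } ≤ (a·√6/√(a − 2))·‖y_0 − y_*‖ / k^{1.5}`. -/
theorem gfdpg_prox_grad_norm_rate
    {V : Type*} [NormedAddCommGroup V] [InnerProductSpace ℝ V] [FiniteDimensional ℝ V]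
    (F G : V → ℝ) (LF : ℝ)
    (hF : ConvexOn ℝ Set.univ F) (hG : ConvexOn ℝ Set.univ G)
    (F' : V → V) (hF' : ∀ y, HasGradientAt F (F' y) y)
    (hLip : ∀ y w : V, ‖F' y - F' w‖ ≤ LF * ‖y - w‖)
    -- q̃ := F + G attains its minimum at y_*
    (ystar : V) (hystar : ∀ y, F ystar + G ystar ≤ F y + G y)
    -- p_L(w) : the unique minimizer over y of Q_L(y, w)
    (P : ℝ → V → V)
    (hP : ∀ L, 0 < L → ∀ w, IsMinOn
      (fun y => F w + ⟪y - w, F' w⟫ + L / 2 * ‖y - w‖^2 + G y) Set.univ (P L w))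
    -- the GFDPG method
    (y w : ℕ → V) (t T Lk : ℕ → ℝ)
    (hw0 : w 0 = y 0) (hL0 : 0 < Lk 0)
    (ht0 : t 0 = T 0) (ht0pos : 0 < t 0) (ht0le : t 0 ≤ 1)
    (hT : ∀ k : ℕ, T k = ∑ i ∈ Finset.range (k+1), t i)
    (hLmono : ∀ k : ℕ, Lk k ≤ Lk (k+1))
    (hdesc : ∀ k : ℕ,
      F (P (Lk (k+1)) (w k)) + G (P (Lk (k+1)) (w k)) ≤
        F (w k) + ⟪P (Lk (k+1)) (w k) - w k, F' (w k)⟫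
          + Lk (k+1) / 2 * ‖P (Lk (k+1)) (w k) - w k‖^2 + G (P (Lk (k+1)) (w k)))
    (hy : ∀ k : ℕ, y (k+1) = P (Lk (k+1)) (w k))
    (htpos : ∀ k : ℕ, 0 < t (k+1)) (htsq : ∀ k : ℕ, t (k+1) ^ 2 ≤ T (k+1))
    (hw : ∀ k : ℕ, w (k+1) = y (k+1)
      + (((T k - t k) * t (k+1)) / (t k * T (k+1))) • (y (k+1) - y k)
      + (((t k ^ 2 - T k) * t (k+1)) / (t k * T (k+1))) • (y (k+1) - w k))
    -- the choice t_k = (k + a)/a with a > 2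
    (a : ℝ) (ha : 2 < a)
    (htchoice : ∀ k : ℕ, t k = ((k : ℝ) + a) / a)
    (k : ℕ) (hk : 1 ≤ k)
    -- L′ > 0 satisfying the descent condition at y_k
    (L' : ℝ) (hL' : 0 < L')
    (hdesc' : F (P L' (y k)) + G (P L' (y k)) ≤
      F (y k) + ⟪P L' (y k) - y k, F' (y k)⟫
        + L' / 2 * ‖P L' (y k) - y k‖^2 + G (P L' (y k))) :
    min ((Finset.Icc 1 k).inf' (Finset.nonempty_Icc.mpr hk) (fun i => ‖y i - w (i-1)‖))
        ‖P L' (y k) - y k‖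
      ≤ (a * Real.sqrt 6 / Real.sqrt (a - 2)) * ‖y 0 - ystar‖ / (k : ℝ) ^ (1.5 : ℝ) :=
  gfdpg_prox_grad_norm_rate_general F G hF hG F' hF' ystar hystar P hP y w t T Lk hw0 hL0 hT hLmono
    hdesc hy hw a ha htchoice k hk L'
end

section
/- Let {y_k, w_k} be the sequences generated by the GFDPG method, and define the auxiliary sequence s_0 := y_0 and s_k := s_{k−1} + t_{k−1}·(y_k − w_{k−1}) for k ≥ 1. Then for any k ≥ 1, Σ_{i=0}^{k−1} (1/2)·(T_i − t_i²)·‖y_{i+1} − w_i‖² + (T_{k−1}/L_k)·(q̃(y_k) − q̃(y_*)) ≤ (1/2)·(‖s_0 − y_*‖² − ‖s_k − y_*‖²). -/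
/-!
Every iteration is a proximal-gradient step, so for every `z` the fundamental inequality
`L/2 ‖y⁺ - w‖² + L ⟪w - z, y⁺ - w⟫ ≤ q̃ z - q̃ y⁺` holds: it combines the descent condition, the
gradient inequality of `F` at `w`, and the `L`-strong convexity of the model `Q_L(·, w)` at its
minimizer `y⁺`. The extrapolation rule for `w` is exactly what makes
`t_k s_k = T_k w_k - (T_k - t_k) y_k`, so adding the inequality at `z = y_k` and `z = y_*` with
weights `T_k - t_k` and `t_k` produces `t_k ⟪s_k - y_*, y_{k+1} - w_k⟫`, which the update of `s`
turns into a difference of squared distances to `y_*`. As `L` is nondecreasing and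
`q̃ ≥ q̃ y_*`, these one-step estimates telescope, since `T_{k+1} - t_{k+1} = T_k`.
-/

open scoped RealInnerProductSpace
open Filter Topology

section
variable {V : Type*} [NormedAddCommGroup V] [InnerProductSpace ℝ V]

theorem ConvexOn.add_inner_le_of_hasGradientAt [CompleteSpace V] {F : V → ℝ} {s : Set V}
    {x z g : V} (hF : ConvexOn ℝ s F) (hx : x ∈ s) (hz : z ∈ s) (hg : HasGradientAt F g x) :
    F x + ⟪z - x, g⟫ ≤ F z := by
  let ℓ : ℝ →ᵃ[ℝ] V := AffineMap.lineMap x z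
  have hderiv : HasDerivAt (F ∘ ℓ) ⟪g, z - x⟫ 0 := by
    have hg' : HasFDerivAt F (InnerProductSpace.toDual ℝ V g : V →L[ℝ] ℝ) (ℓ 0) := by
      simpa [ℓ] using hasGradientAt_iff_hasFDerivAt.mp hg
    simpa using hg'.comp_hasDerivAt (0 : ℝ) AffineMap.hasDerivAt_lineMap
  have hslope := (hF.comp_affineMap ℓ).le_slope_of_hasDerivAt (by simpa [ℓ] using hx)
    (by simpa [ℓ] using hz) zero_lt_one hderiv
  simp only [slope, Function.comp_apply, ℓ, AffineMap.lineMap_apply_zero,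
    AffineMap.lineMap_apply_one, vsub_eq_sub, sub_zero, inv_one, smul_eq_mul, one_mul] at hslope
  linarith [real_inner_comm g (z - x)]

theorem StrongConvexOn.add_mul_sq_norm_sub_le_of_isMinOn {E : Type*} [NormedAddCommGroup E]
    [NormedSpace ℝ E] {f : E → ℝ} {s : Set E} {m : ℝ} {x z : E} (hf : StrongConvexOn s m f)
    (hmin : IsMinOn f s x) (hx : x ∈ s) (hz : z ∈ s) :
    f x + m / 2 * ‖z - x‖ ^ 2 ≤ f z := by
  have hseg : ∀ l ∈ Set.Ioo (0 : ℝ) 1, f x + (1 - l) * (m / 2 * ‖z - x‖ ^ 2) ≤ f z := by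
    rintro l ⟨hl0, hl1⟩
    have hconv := hf.2 hx hz (sub_nonneg.2 hl1.le) hl0.le (sub_add_cancel 1 l)
    have hle := hmin (hf.1 hx hz (sub_nonneg.2 hl1.le) hl0.le (sub_add_cancel 1 l))
    simp only [Set.mem_ofPred_eq, smul_eq_mul, norm_sub_rev x z] at hconv hle
    nlinarith
  have hlim : Tendsto (fun l : ℝ => f x + (1 - l) * (m / 2 * ‖z - x‖ ^ 2)) (𝓝[>] 0)
      (𝓝 (f x + (1 - 0) * (m / 2 * ‖z - x‖ ^ 2))) :=
    ((continuous_const.add ((continuous_const.sub continuous_id).mul continuous_const)).tendsto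
      _).mono_left nhdsWithin_le_nhds
  rw [sub_zero, one_mul] at hlim
  exact le_of_tendsto hlim (eventually_of_mem (Ioo_mem_nhdsGT one_pos) hseg)

/-- `proxModel F G g L w y` is the paper's `Q_L(y, w)`, with `g` in place of `∇F(w)`. -/
noncomputable def proxModel (F G : V → ℝ) (g : V) (L : ℝ) (w y : V) : ℝ :=
  F w + ⟪y - w, g⟫ + L / 2 * ‖y - w‖ ^ 2 + G y

theorem ConvexOn.strongConvexOn_proxModel {F G : V → ℝ} {s : Set V} (hG : ConvexOn ℝ s G)
    (g : V) (L : ℝ) (w : V) : StrongConvexOn s L (proxModel F G g L w) := by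
  rw [strongConvexOn_iff_convex]
  refine (hG.add ((((innerₛₗ ℝ (g - L • w)).convexOn hG.1).add_const
    (F w - ⟪w, g⟫ + L / 2 * ‖w‖ ^ 2)))).congr fun y _ => ?_
  simp only [proxModel, norm_sub_sq_real, Pi.add_apply, innerₛₗ_apply_apply, inner_sub_left,
    real_inner_smul_left, real_inner_comm w y, real_inner_comm g y]
  ring

theorem proxGrad_fundamental_inequality [CompleteSpace V] {F G : V → ℝ} {g w yp : V} {L : ℝ}
    (hF : ConvexOn ℝ Set.univ F) (hG : ConvexOn ℝ Set.univ G) (hg : HasGradientAt F g w)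
    (hmin : IsMinOn (proxModel F G g L w) Set.univ yp)
    (hdesc : F yp + G yp ≤ proxModel F G g L w yp) (z : V) :
    L / 2 * ‖yp - w‖ ^ 2 + L * ⟪w - z, yp - w⟫ ≤ (F z + G z) - (F yp + G yp) := by
  have hstrong := (hG.strongConvexOn_proxModel (F := F) g L w).add_mul_sq_norm_sub_le_of_isMinOn
    hmin (Set.mem_univ yp) (Set.mem_univ z)
  have hgrad := hF.add_inner_le_of_hasGradientAt (Set.mem_univ w) (Set.mem_univ z) hg
  have hsplit : ‖z - yp‖ ^ 2 = ‖z - w‖ ^ 2 + 2 * ⟪w - z, yp - w⟫ + ‖yp - w‖ ^ 2 := by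
    rw [show z - yp = (z - w) - (yp - w) by abel, norm_sub_sq_real, ← neg_sub z w, inner_neg_left]
    ring
  unfold proxModel at hstrong hdesc
  linear_combination hdesc + hstrong + hgrad - L / 2 * hsplit

theorem gfdpg_smul_s_eq {y w s : ℕ → V} {t T : ℕ → ℝ} (ht : ∀ n, t n ≠ 0) (hT : ∀ n, T n ≠ 0)
    (hT0 : T 0 = t 0) (hTsucc : ∀ n, T (n + 1) = T n + t (n + 1)) (hw0 : w 0 = y 0)
    (hs0 : s 0 = y 0)
    (hw : ∀ n, w (n + 1) = y (n + 1)
      + (((T n - t n) * t (n + 1)) / (t n * T (n + 1))) • (y (n + 1) - y n)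
      + (((t n ^ 2 - T n) * t (n + 1)) / (t n * T (n + 1))) • (y (n + 1) - w n))
    (hs : ∀ n, s (n + 1) = s n + t n • (y (n + 1) - w n)) (n : ℕ) :
    t n • s n = T n • w n - (T n - t n) • y n := by
  induction n with
  | zero => rw [hw0, hs0, hT0, sub_self, zero_smul, sub_zero]
  | succ m ih =>
    have hsm : s m = (t m)⁻¹ • (T m • w m - (T m - t m) • y m) := by
      rw [← ih, inv_smul_smul₀ (ht m)]
    have htm := ht m
    have hTm : T m + t (m + 1) ≠ 0 := hTsucc m ▸ hT (m + 1)
    rw [hs m, hw m, hTsucc m, hsm]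
    match_scalars <;> field_simp <;> ring

theorem gfdpg_one_step_estimate {q : V → ℝ} {ystar : V} {y w s : ℕ → V} {t T L : ℕ → ℝ} {n : ℕ}
    (hq : ∀ v, q ystar ≤ q v) (hL : 0 < L n) (hLle : L n ≤ L (n + 1)) (ht : 0 < t n)
    (hTt : t n ≤ T n) (hTsucc : T (n + 1) = T n + t (n + 1))
    (hs : s (n + 1) = s n + t n • (y (n + 1) - w n))
    (hts : t n • s n = T n • w n - (T n - t n) • y n)
    (hprox : ∀ z, L (n + 1) / 2 * ‖y (n + 1) - w n‖ ^ 2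
      + L (n + 1) * ⟪w n - z, y (n + 1) - w n⟫ ≤ q z - q (y (n + 1))) :
    1 / 2 * (T n - t n ^ 2) * ‖y (n + 1) - w n‖ ^ 2
      + ((T (n + 1) - t (n + 1)) / L (n + 1) * (q (y (n + 1)) - q ystar)
        - (T n - t n) / L n * (q (y n) - q ystar))
      ≤ 1 / 2 * ‖s n - ystar‖ ^ 2 - 1 / 2 * ‖s (n + 1) - ystar‖ ^ 2 := by
  set u := y (n + 1) - w n
  have hL' : 0 < L (n + 1) := hL.trans_le hLle
  have hprox' (z : V) : 1 / 2 * ‖u‖ ^ 2 + ⟪w n - z, u⟫ ≤ (q z - q (y (n + 1))) / L (n + 1) := by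
    rw [le_div_iff₀ hL']
    linarith [hprox z]
  have hprev := mul_le_mul_of_nonneg_left (hprox' (y n)) (sub_nonneg.2 hTt)
  have hopt := mul_le_mul_of_nonneg_left (hprox' ystar) ht.le
  have hinner : (T n - t n) * ⟪w n - y n, u⟫ + t n * ⟪w n - ystar, u⟫
      = t n * ⟪s n - ystar, u⟫ := by
    simp only [← real_inner_smul_left, ← inner_add_left]
    congr 1
    rw [smul_sub (t n) (s n), hts]
    module
  have hnorm : ‖s (n + 1) - ystar‖ ^ 2
      = ‖s n - ystar‖ ^ 2 + 2 * (t n * ⟪s n - ystar, u⟫) + t n ^ 2 * ‖u‖ ^ 2 := by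
    rw [hs, add_sub_right_comm, norm_add_sq_real, real_inner_smul_right, norm_smul,
      Real.norm_eq_abs, mul_pow, sq_abs]
  have hmono : (T n - t n) / L (n + 1) * (q (y n) - q ystar)
      ≤ (T n - t n) / L n * (q (y n) - q ystar) :=
    mul_le_mul_of_nonneg_right (div_le_div_of_nonneg_left (sub_nonneg.2 hTt) hL hLle)
      (sub_nonneg.2 (hq _))
  rw [hTsucc, add_sub_cancel_right]
  linear_combination hprev + hopt + hmono - hinner + 1 / 2 * hnorm

theorem sum_range_add_sub_le_of_forall {c e φ : ℕ → ℝ}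
    (h : ∀ i, c i + (e (i + 1) - e i) ≤ φ i - φ (i + 1)) (k : ℕ) :
    ∑ i ∈ Finset.range k, c i + (e k - e 0) ≤ φ 0 - φ k := by
  have := Finset.sum_le_sum fun i (_ : i ∈ Finset.range k) => h i
  rwa [Finset.sum_add_distrib, Finset.sum_range_sub, Finset.sum_range_sub'] at this
end

theorem gfdpg_key_inequality_general
    {V : Type*} [NormedAddCommGroup V] [InnerProductSpace ℝ V] [FiniteDimensional ℝ V]
    (F G : V → ℝ)
    (hF : ConvexOn ℝ Set.univ F) (hG : ConvexOn ℝ Set.univ G)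
    (F' : V → V) (hF' : ∀ y, HasGradientAt F (F' y) y)
    -- q̃ := F + G attains its minimum at y_*
    (ystar : V) (hystar : ∀ y, F ystar + G ystar ≤ F y + G y)
    -- p_L(w) : the unique minimizer over y of Q_L(y, w)
    (P : ℝ → V → V)
    (hP : ∀ L, 0 < L → ∀ w, IsMinOn
      (fun y => F w + ⟪y - w, F' w⟫ + L / 2 * ‖y - w‖^2 + G y) Set.univ (P L w))
    -- the GFDPG method
    (y w : ℕ → V) (t T Lk : ℕ → ℝ)
    (hw0 : w 0 = y 0) (hL0 : 0 < Lk 0)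
    (ht0pos : 0 < t 0)
    (hT : ∀ k : ℕ, T k = ∑ i ∈ Finset.range (k+1), t i)
    (hLmono : ∀ k : ℕ, Lk k ≤ Lk (k+1))
    (hdesc : ∀ k : ℕ,
      F (P (Lk (k+1)) (w k)) + G (P (Lk (k+1)) (w k)) ≤
        F (w k) + ⟪P (Lk (k+1)) (w k) - w k, F' (w k)⟫
          + Lk (k+1) / 2 * ‖P (Lk (k+1)) (w k) - w k‖^2 + G (P (Lk (k+1)) (w k)))
    (hy : ∀ k : ℕ, y (k+1) = P (Lk (k+1)) (w k))
    (htpos : ∀ k : ℕ, 0 < t (k+1))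
    (hw : ∀ k : ℕ, w (k+1) = y (k+1)
      + (((T k - t k) * t (k+1)) / (t k * T (k+1))) • (y (k+1) - y k)
      + (((t k ^ 2 - T k) * t (k+1)) / (t k * T (k+1))) • (y (k+1) - w k))
    -- the auxiliary sequence s
    (s : ℕ → V) (hs0 : s 0 = y 0)
    (hs : ∀ k : ℕ, s (k+1) = s k + t k • (y (k+1) - w k))
    (k : ℕ) (hk : 1 ≤ k) :
    (∑ i ∈ Finset.range k, (1/2) * (T i - t i ^ 2) * ‖y (i+1) - w i‖^2)
      + (T (k-1) / Lk k) * ((F (y k) + G (y k)) - (F ystar + G ystar))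
      ≤ (1/2) * (‖s 0 - ystar‖^2 - ‖s k - ystar‖^2) := by
  obtain ⟨m, rfl⟩ : ∃ m, k = m + 1 := ⟨k - 1, by omega⟩
  have hT0 : T 0 = t 0 := by simp [hT]
  have hTsucc (n : ℕ) : T (n + 1) = T n + t (n + 1) := by rw [hT, hT, Finset.sum_range_succ]
  have ht (n : ℕ) : 0 < t n := n.casesOn ht0pos htpos
  have hTt (n : ℕ) : t n ≤ T n :=
    hT n ▸ Finset.single_le_sum (fun i _ => (ht i).le) (Finset.self_mem_range_succ n)
  have hL (n : ℕ) : 0 < Lk n := hL0.trans_le (monotone_nat_of_le_succ hLmono n.zero_le)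
  have hts := gfdpg_smul_s_eq (fun n => (ht n).ne') (fun n => ((ht n).trans_le (hTt n)).ne')
    hT0 hTsucc hw0 hs0 hw hs
  have hprox (n : ℕ) (z : V) := hy n ▸ proxGrad_fundamental_inequality hF hG (hF' (w n))
    (hP _ (hL (n + 1)) (w n)) (hdesc n) z
  have hsum := sum_range_add_sub_le_of_forall
    (e := fun n => (T n - t n) / Lk n * (F (y n) + G (y n) - (F ystar + G ystar)))
    (fun n => gfdpg_one_step_estimate (q := fun v => F v + G v) hystar (hL n) (hLmono n) (ht n)
      (hTt n) (hTsucc n) (hs n) (hts n) (hprox n)) (m + 1)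
  rw [hTsucc m, hT0] at hsum
  simp only [add_sub_cancel_right, sub_self, zero_div, zero_mul, sub_zero,
    Nat.add_sub_cancel] at hsum ⊢
  linarith

/-- For the GFDPG sequences, with the auxiliary sequence `s_0 := y_0`,
`s_k := s_{k−1} + t_{k−1}·(y_k − w_{k−1})`, for any `k ≥ 1`,
`Σ_{i=0}^{k−1} (1/2)·(T_i − t_i²)·‖y_{i+1} − w_i‖² + (T_{k−1}/L_k)·(q̃(y_k) − q̃(y_*))
  ≤ (1/2)·(‖s_0 − y_*‖² − ‖s_k − y_*‖²)`. -/
theorem gfdpg_key_inequality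
    {V : Type*} [NormedAddCommGroup V] [InnerProductSpace ℝ V] [FiniteDimensional ℝ V]
    (F G : V → ℝ) (LF : ℝ)
    (hF : ConvexOn ℝ Set.univ F) (hG : ConvexOn ℝ Set.univ G)
    (F' : V → V) (hF' : ∀ y, HasGradientAt F (F' y) y)
    (hLip : ∀ y w : V, ‖F' y - F' w‖ ≤ LF * ‖y - w‖)
    -- q̃ := F + G attains its minimum at y_*
    (ystar : V) (hystar : ∀ y, F ystar + G ystar ≤ F y + G y)
    -- p_L(w) : the unique minimizer over y of Q_L(y, w)
    (P : ℝ → V → V)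
    (hP : ∀ L, 0 < L → ∀ w, IsMinOn
      (fun y => F w + ⟪y - w, F' w⟫ + L / 2 * ‖y - w‖^2 + G y) Set.univ (P L w))
    -- the GFDPG method
    (y w : ℕ → V) (t T Lk : ℕ → ℝ)
    (hw0 : w 0 = y 0) (hL0 : 0 < Lk 0)
    (ht0 : t 0 = T 0) (ht0pos : 0 < t 0) (ht0le : t 0 ≤ 1)
    (hT : ∀ k : ℕ, T k = ∑ i ∈ Finset.range (k+1), t i)
    (hLmono : ∀ k : ℕ, Lk k ≤ Lk (k+1))
    (hdesc : ∀ k : ℕ,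
      F (P (Lk (k+1)) (w k)) + G (P (Lk (k+1)) (w k)) ≤
        F (w k) + ⟪P (Lk (k+1)) (w k) - w k, F' (w k)⟫
          + Lk (k+1) / 2 * ‖P (Lk (k+1)) (w k) - w k‖^2 + G (P (Lk (k+1)) (w k)))
    (hy : ∀ k : ℕ, y (k+1) = P (Lk (k+1)) (w k))
    (htpos : ∀ k : ℕ, 0 < t (k+1)) (htsq : ∀ k : ℕ, t (k+1) ^ 2 ≤ T (k+1))
    (hw : ∀ k : ℕ, w (k+1) = y (k+1)
      + (((T k - t k) * t (k+1)) / (t k * T (k+1))) • (y (k+1) - y k)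
      + (((t k ^ 2 - T k) * t (k+1)) / (t k * T (k+1))) • (y (k+1) - w k))
    -- the auxiliary sequence s
    (s : ℕ → V) (hs0 : s 0 = y 0)
    (hs : ∀ k : ℕ, s (k+1) = s k + t k • (y (k+1) - w k))
    (k : ℕ) (hk : 1 ≤ k) :
    (∑ i ∈ Finset.range k, (1/2) * (T i - t i ^ 2) * ‖y (i+1) - w i‖^2)
      + (T (k-1) / Lk k) * ((F (y k) + G (y k)) - (F ystar + G ystar))
      ≤ (1/2) * (‖s 0 - ystar‖^2 - ‖s k - ystar‖^2) :=
  gfdpg_key_inequality_general F G hF hG F' hF' ystar hystar P hP y w t T Lk hw0 hL0 ht0pos hT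
    hLmono hdesc hy htpos hw s hs0 hs k hk
end
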